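/- Let G = (V, E) be a finite directed graph with stubborn node set V_0 and non-stubborn set V_1 = V \ V_0, posting rates λ_k > 0, and let the matrix G (indexed by V_1) have entries G_ii = −Σ_{k friend of i} λ_k and G_ij = λ_j for j ≠ i with (j,i) ∈ E and j ∈ V_1. If from every non-stubborn node there is a path in the reversed follow graph to some stubborn node (every non-stubborn user is reachable by a stubborn user), then G is invertible, and hence the equilibrium condition Gθ = FΨ has a unique solution θ for any stubborn opinion vector Ψ. -/

import Mathlib

/-!
A matrix is weakly chained diagonally dominant if every row is weakly diagonally dominant and
every row reaches a strictly dominant one through the nonzero pattern of the matrix; such a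
matrix is nonsingular. Indeed, if `A x = 0` with `x ≠ 0`, the rows `i` where `‖x i‖` is maximal
are closed under that pattern, and a strictly dominant row among them forces `‖x i‖ = 0`.

The equilibrium matrix is of this kind: `|G i i|` sums the rates of all friends of `i`, its
off-diagonal entries only those of the non-stubborn ones, so a row with a stubborn friend is
strictly dominant, and along a path from `i` to a stubborn node the last non-stubborn node has
a stubborn friend.
-/

open Finset Relation

namespace Matrix

variable {n K : Type*} [Fintype n] [DecidableEq n] [NormedField K] {A : Matrix n n K} {x : n → K}

theorem norm_diag_mul_le_of_mulVec_eq_zero (hx : A *ᵥ x = 0) (i : n) :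
    ‖A i i‖ * ‖x i‖ ≤ ∑ j ∈ univ.erase i, ‖A i j‖ * ‖x j‖ := by
  have hrow : A i i * x i + ∑ j ∈ univ.erase i, A i j * x j = 0 := by
    rw [add_sum_erase _ (fun j => A i j * x j) (mem_univ i)]
    exact congrFun hx i
  calc ‖A i i‖ * ‖x i‖ = ‖∑ j ∈ univ.erase i, A i j * x j‖ := by
        rw [← norm_mul, eq_neg_of_add_eq_zero_left hrow, norm_neg]
    _ ≤ ∑ j ∈ univ.erase i, ‖A i j * x j‖ := norm_sum_le _ _
    _ = ∑ j ∈ univ.erase i, ‖A i j‖ * ‖x j‖ := by simp_rw [norm_mul]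

theorem norm_eq_of_mulVec_eq_zero_of_forall_norm_le (hx : A *ᵥ x = 0) {i : n}
    (hdom : ∑ j ∈ univ.erase i, ‖A i j‖ ≤ ‖A i i‖) (hmax : ∀ j, ‖x j‖ ≤ ‖x i‖) {j : n}
    (hij : A i j ≠ 0) : ‖x j‖ = ‖x i‖ := by
  obtain rfl | hji := eq_or_ne j i
  · rfl
  have hle : ∀ k ∈ univ.erase i, ‖A i k‖ * ‖x k‖ ≤ ‖A i k‖ * ‖x i‖ :=
    fun k _ => mul_le_mul_of_nonneg_left (hmax k) (norm_nonneg _)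
  have hsum : ∑ k ∈ univ.erase i, ‖A i k‖ * ‖x k‖ = ∑ k ∈ univ.erase i, ‖A i k‖ * ‖x i‖ := by
    refine (sum_le_sum hle).antisymm ?_
    calc ∑ k ∈ univ.erase i, ‖A i k‖ * ‖x i‖ = (∑ k ∈ univ.erase i, ‖A i k‖) * ‖x i‖ :=
          (sum_mul _ _ _).symm
      _ ≤ ‖A i i‖ * ‖x i‖ := mul_le_mul_of_nonneg_right hdom (norm_nonneg _)
      _ ≤ _ := norm_diag_mul_le_of_mulVec_eq_zero hx i
  exact mul_left_cancel₀ (norm_ne_zero_iff.mpr hij)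
    ((sum_eq_sum_iff_of_le hle).mp hsum j (mem_erase.mpr ⟨hji, mem_univ j⟩))

theorem norm_diag_le_of_mulVec_eq_zero_of_forall_norm_le (hx : A *ᵥ x = 0) {i : n}
    (hmax : ∀ j, ‖x j‖ ≤ ‖x i‖) (hpos : 0 < ‖x i‖) :
    ‖A i i‖ ≤ ∑ j ∈ univ.erase i, ‖A i j‖ := by
  refine le_of_mul_le_mul_right ?_ hpos
  calc ‖A i i‖ * ‖x i‖ ≤ ∑ j ∈ univ.erase i, ‖A i j‖ * ‖x j‖ :=
        norm_diag_mul_le_of_mulVec_eq_zero hx i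
    _ ≤ ∑ j ∈ univ.erase i, ‖A i j‖ * ‖x i‖ :=
        sum_le_sum fun j _ => mul_le_mul_of_nonneg_left (hmax j) (norm_nonneg _)
    _ = (∑ j ∈ univ.erase i, ‖A i j‖) * ‖x i‖ := (sum_mul _ _ _).symm

theorem det_ne_zero_of_weaklyChainedDiagDominant
    (hdom : ∀ i, ∑ j ∈ univ.erase i, ‖A i j‖ ≤ ‖A i i‖)
    (hchain : ∀ i, ∃ k, ReflTransGen (fun i j => A i j ≠ 0) i k ∧
      ∑ j ∈ univ.erase k, ‖A k j‖ < ‖A k k‖) :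
    A.det ≠ 0 := by
  intro hdet
  obtain ⟨x, hx0, hx⟩ := exists_mulVec_eq_zero_iff.mpr hdet
  obtain ⟨i₀, hi₀⟩ := Function.ne_iff.mp hx0
  have : Nonempty n := ⟨i₀⟩
  obtain ⟨m, hm⟩ := Finite.exists_max (‖x ·‖)
  have hmax_of_reach : ∀ k, ReflTransGen (fun i j => A i j ≠ 0) m k → ∀ j, ‖x j‖ ≤ ‖x k‖ := by
    intro k hmk
    induction hmk with
    | refl => exact hm
    | tail _ hbc ih => rwa [norm_eq_of_mulVec_eq_zero_of_forall_norm_le hx (hdom _) ih hbc]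
  obtain ⟨k, hmk, hk⟩ := hchain m
  have hmaxk := hmax_of_reach k hmk
  have hpos : 0 < ‖x k‖ := (norm_pos_iff.mpr hi₀).trans_le (hmaxk i₀)
  exact (norm_diag_le_of_mulVec_eq_zero_of_forall_norm_le hx hmaxk hpos).not_gt hk

end Matrix

section Equilibrium

variable {V : Type*} [Fintype V] [DecidableEq V] (E : V → V → Prop) [DecidableRel E]
  (V0 : Set V) (lam : V → ℝ)

def equilibriumMatrix : Matrix {v : V // v ∉ V0} {v : V // v ∉ V0} ℝ :=
  Matrix.of fun i j => if i = j then -∑ k ∈ univ.filter (fun k => E k i.1), lam k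
    else if E j.1 i.1 then lam j.1 else 0

variable {E V0 lam}

theorem norm_equilibriumMatrix_diag (hlam : ∀ k, 0 < lam k) (i : {v : V // v ∉ V0}) :
    ‖equilibriumMatrix E V0 lam i i‖ = ∑ k ∈ univ.filter (fun k => E k i.1), lam k := by
  rw [equilibriumMatrix, Matrix.of_apply, if_pos rfl, norm_neg,
    Real.norm_of_nonneg (sum_nonneg fun k _ => (hlam k).le)]

variable [DecidablePred (· ∈ V0)]

theorem sum_norm_equilibriumMatrix_offDiag_le (hlam : ∀ k, 0 < lam k) (i : {v : V // v ∉ V0}) :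
    ∑ j ∈ univ.erase i, ‖equilibriumMatrix E V0 lam i j‖ ≤
      ∑ k ∈ univ.filter (fun k => k ∉ V0 ∧ E k i.1), lam k := by
  have hoff : ∀ j ∈ univ.erase i,
      ‖equilibriumMatrix E V0 lam i j‖ = if E j.1 i.1 then lam j.1 else 0 := by
    intro j hj
    rw [equilibriumMatrix, Matrix.of_apply, if_neg (ne_of_mem_erase hj).symm]
    split_ifs
    · exact Real.norm_of_nonneg (hlam _).le
    · exact norm_zero
  calc ∑ j ∈ univ.erase i, ‖equilibriumMatrix E V0 lam i j‖
      = ∑ j ∈ univ.erase i, if E j.1 i.1 then lam j.1 else 0 := sum_congr rfl hoff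
    _ ≤ ∑ j : {v : V // v ∉ V0}, if E j.1 i.1 then lam j.1 else 0 :=
        sum_le_sum_of_subset_of_nonneg (erase_subset _ _) fun j _ _ => by
          split_ifs
          exacts [(hlam _).le, le_rfl]
    _ = ∑ k ∈ univ.filter (fun k => k ∉ V0 ∧ E k i.1), lam k := by
        rw [← sum_subtype (univ.filter (· ∉ V0)) (by simp) (fun k => if E k i.1 then lam k else 0),
          sum_filter, sum_filter]
        simp only [ite_and]

theorem sum_norm_equilibriumMatrix_offDiag_le_diag (hlam : ∀ k, 0 < lam k)
    (i : {v : V // v ∉ V0}) :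
    ∑ j ∈ univ.erase i, ‖equilibriumMatrix E V0 lam i j‖ ≤ ‖equilibriumMatrix E V0 lam i i‖ := by
  refine (sum_norm_equilibriumMatrix_offDiag_le hlam i).trans ?_
  rw [norm_equilibriumMatrix_diag hlam]
  exact sum_le_sum_of_subset_of_nonneg (monotone_filter_right _ fun _ _ => And.right)
    fun k _ _ => (hlam k).le

theorem sum_norm_equilibriumMatrix_offDiag_lt_diag (hlam : ∀ k, 0 < lam k)
    {i : {v : V // v ∉ V0}} {s : V} (hs : s ∈ V0) (hsi : E s i.1) :
    ∑ j ∈ univ.erase i, ‖equilibriumMatrix E V0 lam i j‖ < ‖equilibriumMatrix E V0 lam i i‖ := by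
  refine (sum_norm_equilibriumMatrix_offDiag_le hlam i).trans_lt ?_
  rw [norm_equilibriumMatrix_diag hlam]
  exact sum_lt_sum_of_subset (monotone_filter_right _ fun _ _ => And.right)
    (mem_filter.mpr ⟨mem_univ s, hsi⟩) (fun h => (mem_filter.mp h).2.1 hs) (hlam s)
    fun k _ _ => (hlam k).le

theorem exists_reflTransGen_equilibriumMatrix_ne_zero (hlam : ∀ k, 0 < lam k) {a s : V}
    (hpath : ReflTransGen (fun a b => E b a) a s) (hs : s ∈ V0) (ha : a ∉ V0) :
    ∃ k, ReflTransGen (fun i j => equilibriumMatrix E V0 lam i j ≠ 0) ⟨a, ha⟩ k ∧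
      ∃ t ∈ V0, E t k.1 := by
  induction hpath using ReflTransGen.head_induction_on with
  | refl => exact absurd hs ha
  | @head a b hab _ ih =>
    by_cases hb : b ∈ V0
    · exact ⟨⟨a, ha⟩, .refl, b, hb, hab⟩
    obtain rfl | hne := eq_or_ne a b
    · exact ih hb
    obtain ⟨k, hk, hfriend⟩ := ih hb
    refine ⟨k, .head ?_ hk, hfriend⟩
    simp [equilibriumMatrix, hne, hab, (hlam b).ne']

theorem isUnit_equilibriumMatrix (hlam : ∀ k, 0 < lam k)
    (hreach : ∀ v, v ∉ V0 → ∃ s ∈ V0, ReflTransGen (fun a b => E b a) v s) :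
    IsUnit (equilibriumMatrix E V0 lam) := by
  refine (Matrix.isUnit_iff_isUnit_det _).mpr <| isUnit_iff_ne_zero.mpr <|
    Matrix.det_ne_zero_of_weaklyChainedDiagDominant
      (sum_norm_equilibriumMatrix_offDiag_le_diag hlam) fun i => ?_
  obtain ⟨s, hs, hpath⟩ := hreach i.1 i.2
  obtain ⟨k, hik, t, ht, htk⟩ := exists_reflTransGen_equilibriumMatrix_ne_zero hlam hpath hs i.2
  exact ⟨k, hik, sum_norm_equilibriumMatrix_offDiag_lt_diag hlam ht htk⟩

end Equilibrium

theorem equilibrium_matrix_invertible_general {V : Type*} [Fintype V] [DecidableEq V]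
    (E : V → V → Prop) [DecidableRel E]
    (V0 : Set V) [DecidablePred (· ∈ V0)]
    (lam : V → ℝ) (hlam : ∀ k, 0 < lam k)
    (hreach : ∀ v, v ∉ V0 → ∃ s ∈ V0, Relation.ReflTransGen (fun a b => E b a) v s)
    (G : Matrix {v : V // v ∉ V0} {v : V // v ∉ V0} ℝ)
    (hG : ∀ i j : {v : V // v ∉ V0},
      G i j = if i = j then -∑ k ∈ Finset.univ.filter (fun k => E k i.1), lam k
              else if E j.1 i.1 then lam j.1 else 0)
    (F : Matrix {v : V // v ∉ V0} {v : V // v ∈ V0} ℝ) :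
    IsUnit G ∧ ∀ Ψ : {v : V // v ∈ V0} → ℝ, ∃! θ, G.mulVec θ = F.mulVec Ψ := by
  obtain rfl : G = equilibriumMatrix E V0 lam := Matrix.ext hG
  have hunit := isUnit_equilibriumMatrix hlam hreach
  exact ⟨hunit, fun Ψ => Function.Bijective.existsUnique
    ⟨Matrix.mulVec_injective_iff_isUnit.mpr hunit, Matrix.mulVec_surjective_iff_isUnit.mpr hunit⟩ _⟩

/-- If every non-stubborn node can reach a stubborn node in the reversed follow graph,
the matrix `G` of the opinion dynamics equilibrium is invertible, so `Gθ = FΨ` has a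
unique solution `θ` for every stubborn opinion vector `Ψ`. -/
theorem equilibrium_matrix_invertible {V : Type*} [Fintype V] [DecidableEq V]
    (E : V → V → Prop) [DecidableRel E]
    (V0 : Set V) [DecidablePred (· ∈ V0)]
    (lam : V → ℝ) (hlam : ∀ k, 0 < lam k)
    (hfriend : ∀ i, i ∉ V0 → ∃ j, E j i)
    (hreach : ∀ v, v ∉ V0 → ∃ s ∈ V0, Relation.ReflTransGen (fun a b => E b a) v s)
    (G : Matrix {v : V // v ∉ V0} {v : V // v ∉ V0} ℝ)
    (hG : ∀ i j : {v : V // v ∉ V0},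
      G i j = if i = j then -∑ k ∈ Finset.univ.filter (fun k => E k i.1), lam k
              else if E j.1 i.1 then lam j.1 else 0)
    (F : Matrix {v : V // v ∉ V0} {v : V // v ∈ V0} ℝ)
    (hF : ∀ i j, F i j = if E j.1 i.1 then lam j.1 else 0) :
    IsUnit G ∧ ∀ Ψ : {v : V // v ∈ V0} → ℝ, ∃! θ, G.mulVec θ = F.mulVec Ψ :=
  equilibrium_matrix_invertible_general E V0 lam hlam hreach G hG F
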